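/- arXiv:2509.23470 — 3 statements merged into one kernel-verified Lean document; each statement's English description precedes it below -/
import Mathlib

section
/- Let L, U, ρ, C be positive real numbers with 0 < L < U and ρ·C > U − L. Define x(k) = (U/L)^{k−1}·((U − L − ρ·C)/(U − L)) + ρ·C/(U − L) for k ≥ 1. Then for every natural number k ≥ 1 with x(k) ≥ ρ·C/U, it holds that (k : ℝ) ≤ log(ρ·C/(ρ·C + L − U)) / log(U/L). -/
open Real

lemma natCast_le_log_div_log_of_pow_le {r a : ℝ} (hr : 1 < r) {k : ℕ} (hk : r ^ k ≤ a) :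
    (k : ℝ) ≤ log a / log r := by
  have ha : 0 < a := (pow_pos (zero_lt_one.trans hr) k).trans_le hk
  rw [log_div_log, le_logb_iff_rpow_le hr ha, rpow_natCast]
  exact hk

/-- With `D = U - L`, the threshold `P / U ≤ x (j + 1)` rearranges to
`(U / L) ^ j * (P - D) ≤ P * L / U`, i.e. `(U / L) ^ (j + 1) ≤ P / (P - D)`. -/
lemma pow_succ_le_of_threshold_le {L U P : ℝ} (hL : 0 < L) (hLU : L < U) (hP : U - L < P)
    (j : ℕ) (hx : P / U ≤ (U / L) ^ j * ((U - L - P) / (U - L)) + P / (U - L)) :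
    (U / L) ^ (j + 1) ≤ P / (P + L - U) := by
  have hU : 0 < U := hL.trans hLU
  have hD : 0 < U - L := sub_pos.mpr hLU
  have hPD : 0 < P + L - U := by linarith
  set t := (U / L) ^ j
  have hx' : t * (P + L - U) * U ≤ P * L := by
    rw [mul_div_assoc', ← add_div, div_le_div_iff₀ hU hD] at hx
    nlinarith
  rw [pow_succ, le_div_iff₀ hPD]
  calc t * (U / L) * (P + L - U) = t * (P + L - U) * U / L := by ring
    _ ≤ P := by rw [div_le_iff₀ hL]; exact hx'

theorem resolve_count_bound_general (L U ρ C : ℝ)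
    (hL : 0 < L) (hLU : L < U)
    (h : U - L < ρ * C) (k : ℕ) (hk : 1 ≤ k)
    (hx : ρ * C / U ≤ (U / L) ^ (k - 1) * ((U - L - ρ * C) / (U - L)) + ρ * C / (U - L)) :
    (k : ℝ) ≤ Real.log (ρ * C / (ρ * C + L - U)) / Real.log (U / L) := by
  obtain ⟨j, rfl⟩ := Nat.exists_eq_add_of_le' hk
  rw [Nat.add_sub_cancel] at hx
  exact natCast_le_log_div_log_of_pow_le ((one_lt_div hL).mpr hLU)
    (pow_succ_le_of_threshold_le hL hLU h j hx)

/-- Counting bound of Theorem 3: if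
`x k = (U/L)^{k−1}·((U−L−ρ·C)/(U−L)) + ρ·C/(U−L)` still satisfies `x k ≥ ρ·C/U`, then
`k ≤ log(ρ·C/(ρ·C + L − U)) / log(U/L)`. -/
theorem resolve_count_bound (L U ρ C : ℝ)
    (hL : 0 < L) (hLU : L < U) (hρ : 0 < ρ) (hC : 0 < C)
    (h : U - L < ρ * C) (k : ℕ) (hk : 1 ≤ k)
    (hx : ρ * C / U ≤ (U / L) ^ (k - 1) * ((U - L - ρ * C) / (U - L)) + ρ * C / (U - L)) :
    (k : ℝ) ≤ Real.log (ρ * C / (ρ * C + L - U)) / Real.log (U / L) :=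
  resolve_count_bound_general L U ρ C hL hLU h k hk hx
end

section
/- Let L, U, α, ρ, C be real numbers with 0 < L < U, α > 0, and ρ·C ≥ U − L, and let x : ℕ → ℝ satisfy x(1) = 1 and x(k+1) = (U/L)·x(k) − ρ·C/L for every k ≥ 1. Define u(k) = 1 + x(k)^{−1/α} for those k with x(k) > 0. Then for every k ≥ 2 with x(k+1) > 0 (so that x(k−1) ≥ x(k) ≥ x(k+1) > 0), the gaps are increasing: u(k+1) − u(k) ≥ u(k) − u(k−1). -/
/-- Midpoint convexity of `t ^ p` for `p ≤ 0` on the positive reals. -/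
lemma rpow_midpoint_le {p u v : ℝ} (hp : p ≤ 0) (hu : 0 < u) (hv : 0 < v) :
    ((u + v) / 2) ^ p ≤ (u ^ p + v ^ p) / 2 := by
  have hA : (0:ℝ) < u ^ (p/2) := Real.rpow_pos_of_pos hu _
  have hB : (0:ℝ) < v ^ (p/2) := Real.rpow_pos_of_pos hv _
  have hu2 : u ^ p = u ^ (p/2) * u ^ (p/2) := by
    rw [← Real.rpow_add hu]; ring_nf
  have hv2 : v ^ p = v ^ (p/2) * v ^ (p/2) := by
    rw [← Real.rpow_add hv]; ring_nf
  have hsqrt : Real.sqrt (u * v) ≤ (u + v) / 2 := by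
    rw [Real.sqrt_mul hu.le]
    nlinarith [sq_nonneg (Real.sqrt u - Real.sqrt v), Real.sq_sqrt hu.le,
      Real.sq_sqrt hv.le, Real.sqrt_nonneg u, Real.sqrt_nonneg v]
  have hsp : (0:ℝ) < Real.sqrt (u * v) := Real.sqrt_pos.2 (mul_pos hu hv)
  have h1 : ((u + v) / 2) ^ p ≤ (Real.sqrt (u * v)) ^ p :=
    Real.rpow_le_rpow_of_nonpos hsp hsqrt hp
  have h2 : (Real.sqrt (u * v)) ^ p = u ^ (p/2) * v ^ (p/2) := by
    rw [Real.sqrt_eq_rpow, ← Real.rpow_mul (mul_nonneg hu.le hv.le),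
      show (1/2 : ℝ) * p = p/2 by ring]
    exact Real.mul_rpow hu.le hv.le
  have h3 : u ^ (p/2) * v ^ (p/2) ≤ (u ^ p + v ^ p) / 2 := by
    rw [hu2, hv2]
    nlinarith [sq_nonneg (u ^ (p/2) - v ^ (p/2))]
  calc ((u + v) / 2) ^ p ≤ (Real.sqrt (u * v)) ^ p := h1
    _ = u ^ (p/2) * v ^ (p/2) := h2
    _ ≤ (u ^ p + v ^ p) / 2 := h3

/-- Gap inequality for `t ^ p` with `p ≤ 0`. -/
lemma rpow_gap_le {p a b c : ℝ} (hp : p ≤ 0) (hc : 0 < c) (hcb : c ≤ b) (hba : b ≤ a)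
    (hgap : a - b ≤ b - c) : b ^ p - a ^ p ≤ c ^ p - b ^ p := by
  have hb : 0 < b := hc.trans_le hcb
  have ha : 0 < a := hb.trans_le hba
  have h2b : 0 < 2 * b - a := by linarith
  have h1 : ((a + (2 * b - a)) / 2) ^ p ≤ (a ^ p + (2 * b - a) ^ p) / 2 :=
    rpow_midpoint_le hp ha h2b
  have heq : (a + (2 * b - a)) / 2 = b := by ring
  rw [heq] at h1
  have h2 : (2 * b - a) ^ p ≤ c ^ p :=
    Real.rpow_le_rpow_of_nonpos hc (by linarith) hp
  linarith

/-- First assertion of Theorem 3: the intervals between the lower bounds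
`u k = 1 + (x k)^{−1/α}` on successive optimal re-solving times are increasing, where
`x 1 = 1` and `x (k+1) = (U/L)·x k − ρ·C/L`. -/
theorem resolve_intervals_increasing (L U α ρ C : ℝ)
    (hL : 0 < L) (hLU : L < U) (hα : 0 < α) (hc : U - L ≤ ρ * C)
    (x : ℕ → ℝ) (hx1 : x 1 = 1)
    (hrec : ∀ k ≥ 1, x (k + 1) = (U / L) * x k - ρ * C / L) :
    ∀ k ≥ 2, 0 < x (k + 1) →
      (1 + x k ^ (-1 / α)) - (1 + x (k - 1) ^ (-1 / α)) ≤
        (1 + x (k + 1) ^ (-1 / α)) - (1 + x k ^ (-1 / α)) := by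
  have hUL : 1 ≤ U / L := (one_le_div hL).2 hLU.le
  -- x k ≤ 1 for all k ≥ 1
  have hle1 : ∀ k, 1 ≤ k → x k ≤ 1 := by
    intro k hk
    induction k, hk using Nat.le_induction with
    | base => rw [hx1]
    | succ n hn ih =>
      have h := hrec n hn
      rw [h]
      have h1 : (U / L) * x n ≤ U / L := by
        have := mul_le_mul_of_nonneg_left ih (le_trans zero_le_one hUL)
        simpa using this
      have : U / L - ρ * C / L ≤ 1 := by
        rw [div_sub_div_same, div_le_one hL]; linarith
      linarith
  -- x is decreasing for k ≥ 1
  have hdec : ∀ k, 1 ≤ k → x (k + 1) ≤ x k := by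
    intro k hk
    have h := hrec k hk
    have h1 := hle1 k hk
    rw [h, div_mul_eq_mul_div, div_sub_div_same, div_le_iff₀ hL]
    nlinarith
  intro k hk hpos
  obtain ⟨m, rfl⟩ : ∃ m, k = m + 2 := ⟨k - 2, by omega⟩
  have hk1 : m + 2 - 1 = m + 1 := by omega
  rw [hk1]
  set a := x (m + 1) with ha
  set b := x (m + 2) with hb
  set c := x (m + 2 + 1) with hcdef
  have hcb : c ≤ b := hdec (m + 2) (by omega)
  have hba : b ≤ a := hdec (m + 1) (by omega)
  have hgap : a - b ≤ b - c := by
    have h1 := hrec (m + 1) (by omega)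
    have h2 := hrec (m + 2) (by omega)
    have hdiff : b - c = (U / L) * (a - b) := by
      rw [hcdef, h2, hb, h1]; ring
    nlinarith
  have hp : (-1 : ℝ) / α ≤ 0 := div_nonpos_of_nonpos_of_nonneg (by norm_num) hα.le
  have := rpow_gap_le hp hpos hcb hba hgap
  linarith
end

section
/- Let L, U, α, ρ, C be real numbers with 0 < L < U, α > 0, and ρ·C ≥ U − L. Define B(x) = (U/L)^{x−1}·((U − L − ρ·C)/(U − L)) + ρ·C/(U − L) and h(x) = 1 + B(x)^{−1/α} for real x. Let b be a real number with B(b) > 0 (then B(x) ≥ B(b) > 0 for all x ≤ b, since B is non-increasing). Then h is convex on the interval (−∞, b]. -/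
/-!
`B` is concave, being a nonpositive multiple of an exponential plus a constant, and it is
positive on `(-∞, b]` because it is antitone. A positive concave function has a concave logarithm,
so `B ^ (-1/α) = exp (-(log B) / α)` is the exponential of a convex function, hence convex.
-/

open Set Real

section Composition

variable {𝕜 E β γ : Type*} [Semiring 𝕜] [PartialOrder 𝕜] [AddCommMonoid E] [AddCommMonoid β]
  [PartialOrder β] [AddCommMonoid γ] [PartialOrder γ] [SMul 𝕜 E] [SMul 𝕜 β] [SMul 𝕜 γ]
  {s : Set E} {t : Set β} {f : E → β} {g : β → γ}

theorem ConvexOn.comp_of_mapsTo (hg : ConvexOn 𝕜 t g) (hf : ConvexOn 𝕜 s f)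
    (hg' : MonotoneOn g t) (hst : MapsTo f s t) : ConvexOn 𝕜 s (g ∘ f) :=
  ⟨hf.1, fun _ hx _ hy _ _ ha hb hab =>
    (hg' (hst <| hf.1 hx hy ha hb hab) (hg.1 (hst hx) (hst hy) ha hb hab)
      (hf.2 hx hy ha hb hab)).trans (hg.2 (hst hx) (hst hy) ha hb hab)⟩

theorem ConcaveOn.comp_of_mapsTo (hg : ConcaveOn 𝕜 t g) (hf : ConcaveOn 𝕜 s f)
    (hg' : MonotoneOn g t) (hst : MapsTo f s t) : ConcaveOn 𝕜 s (g ∘ f) :=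
  ⟨hf.1, fun _ hx _ hy _ _ ha hb hab =>
    (hg.2 (hst hx) (hst hy) ha hb hab).trans
      (hg' (hg.1 (hst hx) (hst hy) ha hb hab) (hst <| hf.1 hx hy ha hb hab)
        (hf.2 hx hy ha hb hab))⟩

end Composition

theorem ConcaveOn.convexOn_rpow_of_nonpos {E : Type*} [AddCommGroup E] [Module ℝ E] {s : Set E}
    {f : E → ℝ} (hf : ConcaveOn ℝ s f) (hf₀ : ∀ x ∈ s, 0 < f x) {p : ℝ} (hp : p ≤ 0) :
    ConvexOn ℝ s fun x => f x ^ p := by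
  have hlog : ConcaveOn ℝ s (log ∘ f) :=
    strictConcaveOn_log_Ioi.concaveOn.comp_of_mapsTo hf strictMonoOn_log.monotoneOn hf₀
  have hexponent : ConvexOn ℝ s fun x => p * log (f x) := by
    refine (hlog.smul (neg_nonneg.2 hp)).neg.congr fun x _ => ?_
    simp [smul_eq_mul]
  refine (convexOn_exp.comp_of_mapsTo hexponent (exp_monotone.monotoneOn _)
    (mapsTo_univ _ _)).congr fun x hx => ?_
  simp [rpow_def_of_pos (hf₀ x hx), mul_comm]

theorem concaveOn_rpow_sub_one_mul_add {q A : ℝ} (hq : 0 < q) (hA : A ≤ 0) (K : ℝ) :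
    ConcaveOn ℝ univ fun x : ℝ => q ^ (x - 1) * A + K := by
  have hshift : ConvexOn ℝ univ fun x : ℝ => q ^ (x - 1) :=
    ((convexOn_rpow_left hq).translate_right (-1)).congr fun x _ => by simp [sub_eq_neg_add]
  refine ((hshift.smul (neg_nonneg.2 hA)).neg.add_const K).congr fun x _ => ?_
  simp [smul_eq_mul, mul_comm]

theorem antitone_rpow_sub_one_mul_add {q A : ℝ} (hq : 1 ≤ q) (hA : A ≤ 0) (K : ℝ) :
    Antitone fun x : ℝ => q ^ (x - 1) * A + K := fun _ _ hxy =>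
  add_le_add_left (mul_le_mul_of_nonpos_right
    (rpow_le_rpow_of_exponent_le hq (sub_le_sub_right hxy 1)) hA) K

/-- Convexity of the continuous interpolation
`h(x) = 1 + B(x)^{−1/α}` with `B(x) = (U/L)^{x−1}·((U−L−ρ·C)/(U−L)) + ρ·C/(U−L)`
on `(−∞, b]`, where `B b > 0`. -/
theorem interpolation_convex (L U α ρ C : ℝ)
    (hL : 0 < L) (hLU : L < U) (hα : 0 < α) (hc : U - L ≤ ρ * C)
    (b : ℝ)
    (hb : 0 < (U / L) ^ (b - 1) * ((U - L - ρ * C) / (U - L)) + ρ * C / (U - L)) :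
    ConvexOn ℝ (Set.Iic b)
      (fun x : ℝ =>
        1 + ((U / L) ^ (x - 1) * ((U - L - ρ * C) / (U - L)) + ρ * C / (U - L)) ^ (-1 / α)) := by
  have hq : 1 ≤ U / L := (one_le_div hL).2 hLU.le
  have hA : (U - L - ρ * C) / (U - L) ≤ 0 :=
    div_nonpos_of_nonpos_of_nonneg (by linarith) (by linarith)
  have hB := (concaveOn_rpow_sub_one_mul_add (zero_lt_one.trans_le hq) hA (ρ * C / (U - L))).subset
    (subset_univ _) (convex_Iic b)
  have hBpos :
      ∀ x ∈ Iic b, 0 < (U / L) ^ (x - 1) * ((U - L - ρ * C) / (U - L)) + ρ * C / (U - L) :=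
    fun x hx => hb.trans_le (antitone_rpow_sub_one_mul_add hq hA _ hx)
  exact (convexOn_const 1 (convex_Iic b)).add
    (hB.convexOn_rpow_of_nonpos hBpos (div_nonpos_of_nonpos_of_nonneg (by norm_num) hα.le))
end
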